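/- arXiv:1805.04486 — 2 statements merged into one kernel-verified Lean document; each statement's English description precedes it below -/
import Mathlib

section
/- For natural numbers m ≤ n, the Stirling number of the second kind satisfies S(n,m) = C(n,m)·E[S_m^{n-m}], where S_m is the sum of m independent uniform random variables on [0,1]. -/
open MeasureTheory

/-- Stirling numbers of the second kind. -/
def stirlingSnd : ℕ → ℕ → ℕ
  | 0, 0 => 1
  | 0, _ + 1 => 0
  | _ + 1, 0 => 0
  | n + 1, k + 1 => (k + 1) * stirlingSnd n (k + 1) + stirlingSnd n k

/-!
Write `M(m, k) = E[S_m ^ k]`. Adding one more independent uniform variable `U`, expanding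
binomially and using `E[U ^ j] = 1 / (j + 1)` gives
`M(m + 1, k) = ∑_{i + j = k} C(k, i) M(m, i) / (j + 1)`, with `M(0, k) = 0 ^ k`.
The numbers `S(m + k, m) / C(m + k, m)` satisfy the same recursion: after clearing
denominators it becomes `(m + 1) S(N, m + 1) = ∑_{j < N} C(N, j) S(j, m)`, which counts
partitions of `N` points into `m + 1` blocks with a marked block by the complement of that block.
-/

open Finset

theorem stirlingSnd_eq_stirlingSecond : stirlingSnd = Nat.stirlingSecond := by
  funext n k
  induction n generalizing k with
  | zero => cases k <;> rfl
  | succ n ih => cases k <;> simp [stirlingSnd, Nat.stirlingSecond, ih]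

namespace Nat

theorem stirlingSecond_succ_succ_eq_sum_choose_mul (n m : ℕ) :
    stirlingSecond (n + 1) (m + 1) = ∑ j ∈ range (n + 1), n.choose j * stirlingSecond j m := by
  induction n generalizing m with
  | zero => cases m <;> simp [stirlingSecond]
  | succ n ih =>
    have pascal : ∑ j ∈ range (n + 2), (n + 1).choose j * stirlingSecond j m
        = ∑ j ∈ range (n + 1), n.choose j * stirlingSecond (j + 1) m
          + ∑ j ∈ range (n + 2), n.choose j * stirlingSecond j m := by
      simp only [sum_range_succ' _ (n + 1), choose_succ_succ', add_mul, sum_add_distrib,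
        choose_zero_right]
      ring
    have shifted : ∑ j ∈ range (n + 1), n.choose j * stirlingSecond (j + 1) m
        = m * stirlingSecond (n + 1) (m + 1) + stirlingSecond (n + 1) m := by
      cases m with
      | zero => simp
      | succ m =>
        simp only [stirlingSecond_succ_succ, mul_add, sum_add_distrib, mul_left_comm _ (m + 1),
          ← mul_sum, ← ih]
    rw [pascal, shifted, sum_range_succ, choose_succ_self, zero_mul, add_zero, ← ih,
      stirlingSecond_succ_succ]
    ring

theorem succ_mul_stirlingSecond_succ (n m : ℕ) :
    (m + 1) * stirlingSecond n (m + 1) = ∑ j ∈ range n, n.choose j * stirlingSecond j m := by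
  have h := stirlingSecond_succ_succ_eq_sum_choose_mul n m
  rw [sum_range_succ, choose_self, one_mul, stirlingSecond_succ_succ] at h
  omega

theorem add_choose_mul_choose_mul_succ (m i j : ℕ) :
    (m + 1 + (i + j)).choose (m + 1) * (i + j).choose i * (m + 1)
      = (m + 1 + (i + j)).choose (j + 1) * (m + i).choose m * (j + 1) := by
  suffices h : ((m + 1 + (i + j)).choose (m + 1) * (i + j).choose i * (m + 1) : ℚ)
      = (m + 1 + (i + j)).choose (j + 1) * (m + i).choose m * (j + 1) by exact_mod_cast h
  rw [cast_add_choose, cast_add_choose, cast_add_choose,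
    show m + 1 + (i + j) = j + 1 + (m + i) by ring, cast_add_choose]
  simp only [factorial_succ, cast_mul, cast_add, cast_one]
  field_simp

theorem stirlingSecond_div_choose_succ (m k : ℕ) :
    (stirlingSecond (m + 1 + k) (m + 1) : ℝ) / (m + 1 + k).choose (m + 1)
      = ∑ p ∈ antidiagonal k, (k.choose p.1 : ℝ)
          * ((stirlingSecond (m + p.1) m : ℝ) / (m + p.1).choose m * ((p.2 : ℝ) + 1)⁻¹) := by
  have reindexed : (m + 1) * stirlingSecond (m + 1 + k) (m + 1)
      = ∑ p ∈ antidiagonal k, (m + 1 + k).choose (p.2 + 1) * stirlingSecond (m + p.1) m := by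
    rw [succ_mul_stirlingSecond_succ, show m + 1 + k = m + (k + 1) by ring, sum_range_add,
      sum_eq_zero fun j hj => by rw [stirlingSecond_eq_zero_of_lt (mem_range.1 hj), mul_zero],
      zero_add, Nat.sum_antidiagonal_eq_sum_range_succ_mk]
    refine sum_congr rfl fun i hi => ?_
    have hik := mem_range.1 hi
    rw [choose_symm_of_eq_add (show m + (k + 1) = m + i + (k - i + 1) by omega)]
  have termwise : ∀ p ∈ antidiagonal k, ((m + 1 + k).choose (m + 1) * (m + 1) : ℝ)
      * ((k.choose p.1 : ℝ) * ((stirlingSecond (m + p.1) m : ℝ) / (m + p.1).choose m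
        * ((p.2 : ℝ) + 1)⁻¹))
      = (m + 1 + k).choose (p.2 + 1) * stirlingSecond (m + p.1) m := by
    rintro ⟨i, j⟩ hij
    obtain rfl : i + j = k := mem_antidiagonal.1 hij
    have h : ((m + 1 + (i + j)).choose (m + 1) * (i + j).choose i * (m + 1) : ℝ)
        = (m + 1 + (i + j)).choose (j + 1) * (m + i).choose m * (j + 1) := by
      exact_mod_cast add_choose_mul_choose_mul_succ m i j
    have : ((m + i).choose m : ℝ) ≠ 0 := by exact_mod_cast (choose_pos (by omega)).ne'
    field_simp
    linear_combination (stirlingSecond (m + i) m : ℝ) * h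
  have hC : ((m + 1 + k).choose (m + 1) : ℝ) ≠ 0 := by
    exact_mod_cast (choose_pos (by omega)).ne'
  rw [← mul_right_inj' (mul_ne_zero hC m.cast_add_one_ne_zero), mul_sum, sum_congr rfl termwise,
    mul_right_comm, mul_div_cancel₀ _ hC, mul_comm]
  exact_mod_cast reindexed

end Nat

namespace ProbabilityTheory

variable {Ω : Type*} [MeasurableSpace Ω] {μ : Measure Ω}

section IndepFun

variable {X Y : Ω → ℝ}

theorem IndepFun.integrable_pow_mul_pow (hXY : IndepFun X Y μ) {i j : ℕ}
    (hX : Integrable (fun ω => X ω ^ i) μ) (hY : Integrable (fun ω => Y ω ^ j) μ) :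
    Integrable (fun ω => X ω ^ i * Y ω ^ j) μ :=
  (hXY.comp (measurable_id.pow_const i) (measurable_id.pow_const j)).integrable_mul hX hY

theorem IndepFun.integrable_add_pow (hXY : IndepFun X Y μ)
    (hX : ∀ j, Integrable (fun ω => X ω ^ j) μ) (hY : ∀ j, Integrable (fun ω => Y ω ^ j) μ)
    (k : ℕ) : Integrable (fun ω => (X ω + Y ω) ^ k) μ := by
  simp_rw [(Commute.all (S := ℝ) _ _).add_pow', nsmul_eq_mul]
  exact integrable_finsetSum _ fun _ _ =>
    (hXY.integrable_pow_mul_pow (hX _) (hY _)).const_mul _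

theorem IndepFun.integral_add_pow (hXY : IndepFun X Y μ)
    (hX : ∀ j, Integrable (fun ω => X ω ^ j) μ) (hY : ∀ j, Integrable (fun ω => Y ω ^ j) μ)
    (k : ℕ) :
    ∫ ω, (X ω + Y ω) ^ k ∂μ = ∑ p ∈ antidiagonal k,
      (k.choose p.1 : ℝ) * ((∫ ω, X ω ^ p.1 ∂μ) * ∫ ω, Y ω ^ p.2 ∂μ) := by
  simp_rw [(Commute.all (S := ℝ) _ _).add_pow', nsmul_eq_mul]
  rw [integral_finsetSum _ fun _ _ => (hXY.integrable_pow_mul_pow (hX _) (hY _)).const_mul _]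
  refine sum_congr rfl fun p _ => ?_
  rw [integral_const_mul]
  congr 1
  exact (hXY.comp (measurable_id.pow_const p.1) (measurable_id.pow_const p.2))
    |>.integral_mul_eq_mul_integral (hX _).aestronglyMeasurable (hY _).aestronglyMeasurable

end IndepFun

section Uniform

variable {Y : Ω → ℝ}

-- `μ.map Y` is junk `0` unless `Y` is a.e.-measurable.
theorem aemeasurable_of_map_eq_uniform (hY : μ.map Y = volume.restrict (Set.Icc (0 : ℝ) 1)) :
    AEMeasurable Y μ :=
  .of_map_ne_zero (by simp [hY])

theorem integrable_pow_of_map_eq_uniform (hY : μ.map Y = volume.restrict (Set.Icc (0 : ℝ) 1))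
    (j : ℕ) : Integrable (fun ω => Y ω ^ j) μ := by
  have : Integrable (fun x : ℝ => x ^ j) (μ.map Y) := by
    rw [hY]
    exact (continuous_pow j).integrableOn_Icc
  exact this.comp_aemeasurable (aemeasurable_of_map_eq_uniform hY)

theorem integral_pow_of_map_eq_uniform (hY : μ.map Y = volume.restrict (Set.Icc (0 : ℝ) 1))
    (j : ℕ) : ∫ ω, Y ω ^ j ∂μ = ((j : ℝ) + 1)⁻¹ := by
  rw [← integral_map (aemeasurable_of_map_eq_uniform hY) (continuous_pow j).aestronglyMeasurable,
    hY, integral_Icc_eq_integral_Ioc, ← intervalIntegral.integral_of_le zero_le_one, integral_pow]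
  simp

end Uniform

variable {ι : Type*} {U : ι → Ω → ℝ}

theorem iIndepFun.indepFun_sum_apply_of_notMem (hU : iIndepFun U μ)
    (hU_meas : ∀ i, AEMeasurable (U i) μ) {s : Finset ι} {a : ι} (ha : a ∉ s) :
    IndepFun (fun ω => ∑ i ∈ s, U i ω) (U a) μ := by
  simpa only [Finset.sum_fn] using hU.indepFun_finsetSum_of_notMem₀ hU_meas ha

variable (hU : iIndepFun U μ) (hunif : ∀ i, μ.map (U i) = volume.restrict (Set.Icc (0 : ℝ) 1))
include hU hunif

theorem integrable_sum_pow_of_map_eq_uniform [IsFiniteMeasure μ] (s : Finset ι) (k : ℕ) :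
    Integrable (fun ω => (∑ i ∈ s, U i ω) ^ k) μ := by
  induction s using Finset.cons_induction generalizing k with
  | empty => simp
  | cons a s ha ih =>
    simp_rw [sum_cons, add_comm (U a _)]
    have hindep := hU.indepFun_sum_apply_of_notMem
      (fun i => aemeasurable_of_map_eq_uniform (hunif i)) ha
    exact hindep.integrable_add_pow ih (integrable_pow_of_map_eq_uniform (hunif a)) k

theorem integral_sum_pow_of_map_eq_uniform [IsProbabilityMeasure μ] (s : Finset ι) (k : ℕ) :
    ∫ ω, (∑ i ∈ s, U i ω) ^ k ∂μ
      = (Nat.stirlingSecond (#s + k) #s : ℝ) / (#s + k).choose #s := by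
  induction s using Finset.cons_induction generalizing k with
  | empty => cases k <;> simp
  | cons a s ha ih =>
    simp_rw [card_cons, sum_cons, add_comm (U a _)]
    have hindep := hU.indepFun_sum_apply_of_notMem
      (fun i => aemeasurable_of_map_eq_uniform (hunif i)) ha
    rw [hindep.integral_add_pow (integrable_sum_pow_of_map_eq_uniform hU hunif s)
      (integrable_pow_of_map_eq_uniform (hunif a)), Nat.stirlingSecond_div_choose_succ]
    simp_rw [ih, integral_pow_of_map_eq_uniform (hunif a)]

end ProbabilityTheory

theorem stirlingSnd_eq_choose_mul_moment_general
    {Ω : Type*} [MeasurableSpace Ω] (μ : Measure Ω) [IsProbabilityMeasure μ]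
    (m n : ℕ) (hmn : m ≤ n) (U : Fin m → Ω → ℝ)
    (hindep : ProbabilityTheory.iIndepFun U μ)
    (hunif : ∀ i, Measure.map (U i) μ = volume.restrict (Set.Icc (0:ℝ) 1)) :
    (stirlingSnd n m : ℝ) = (n.choose m : ℝ) * ∫ ω, (∑ i, U i ω) ^ (n - m) ∂μ := by
  have hchoose : (n.choose m : ℝ) ≠ 0 := by exact_mod_cast (Nat.choose_pos hmn).ne'
  rw [ProbabilityTheory.integral_sum_pow_of_map_eq_uniform hindep hunif, card_univ,
    Fintype.card_fin, Nat.add_sub_cancel' hmn, mul_div_cancel₀ _ hchoose,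
    stirlingSnd_eq_stirlingSecond]

theorem stirlingSnd_eq_choose_mul_moment
    {Ω : Type*} [MeasurableSpace Ω] (μ : Measure Ω) [IsProbabilityMeasure μ]
    (m n : ℕ) (hmn : m ≤ n) (U : Fin m → Ω → ℝ) (hmeas : ∀ i, Measurable (U i))
    (hindep : ProbabilityTheory.iIndepFun U μ)
    (hunif : ∀ i, Measure.map (U i) μ = volume.restrict (Set.Icc (0:ℝ) 1)) :
    (stirlingSnd n m : ℝ) = (n.choose m : ℝ) * ∫ ω, (∑ i, U i ω) ^ (n - m) ∂μ :=
  stirlingSnd_eq_choose_mul_moment_general μ m n hmn U hindep hunif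
end

section
/- Let (c_n) be the Cauchy numbers and m ≥ 1, μ, n ≥ 0. Then ∑_{l_1+⋯+l_m=μ} multinomial(μ; l_1,…,l_m) ∑_{k_1+⋯+k_m=n} multinomial(n; k_1,…,k_m) c_{k_1+l_1}⋯c_{k_m+l_m} = ∫_0^m (θ)_{μ+n} ρ_m(θ) dθ, where ρ_m is the density of the sum of m independent uniform [0,1] random variables. -/
/-!
Both sides equal `∑_{j_1+⋯+j_m = μ+n} multinomial(μ+n; j) c_{j_1}⋯c_{j_m}`.

On the left this is the multinomial Vandermonde identity; splitting off the first coordinate of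
each tuple reduces it to `C(μ+n, r) = ∑_{a+b=r} C(μ,a) C(n,b)`.

On the right, induct on `m`. The density `ρ_{m+1}` is the convolution of `ρ_m` with the uniform
density on `[0,1]`, so `∫ (θ)_N ρ_{m+1} = ∫ (∫_0^1 (θ+u)_N du) ρ_m(θ) dθ`, and the Vandermonde
identity `(θ+u)_N = ∑ C(N,a) (u)_a (θ)_{N-a}` turns the inner integral into
`∑ C(N,a) c_a (θ)_{N-a}`. The convolution identity follows by integrating by parts against the
distribution function `Φ_m` of `ρ_m`: Pascal's rule gives `ρ_{m+1}(θ) = Φ_m(θ) - Φ_m(θ-1)`, and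
`Φ_m = 1` beyond `m` because the `m`-th difference of `x ^ m` is `m!`.
-/

open Finset

/-- Falling factorial `(θ)_n = θ(θ-1)⋯(θ-n+1)`. -/
noncomputable def fallFac (θ : ℝ) (n : ℕ) : ℝ := ∏ i ∈ Finset.range n, (θ - i)

/-- Cauchy numbers `c n = ∫_0^1 (θ)_n dθ`. -/
noncomputable def cauchy (n : ℕ) : ℝ := ∫ θ in (0:ℝ)..1, fallFac θ n

/-- The Irwin–Hall spline density on `[0,m]`. -/
noncomputable def rhoIH (m : ℕ) (θ : ℝ) : ℝ :=
  (1 / (m - 1).factorial : ℝ) *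
    ∑ k ∈ Finset.range m, (m.choose k : ℝ) * (-1) ^ k * max (θ - k) 0 ^ (m - 1)

open intervalIntegral

@[fun_prop]
lemma continuous_fallFac (n : ℕ) : Continuous fun θ => fallFac θ n := by
  unfold fallFac; fun_prop

lemma fallFac_eq_smeval (θ : ℝ) (n : ℕ) : fallFac θ n = (descPochhammer ℤ n).smeval θ := by
  rw [fallFac, ← descPochhammer_eval_eq_prod_range, ← Polynomial.aeval_eq_smeval,
    ← descPochhammer_map (Int.castRingHom ℝ), Polynomial.eval_map, Polynomial.aeval_def]
  rfl

lemma fallFac_add (x y : ℝ) (N : ℕ) :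
    fallFac (x + y) N = ∑ p ∈ antidiagonal N, N.choose p.1 * (fallFac x p.1 * fallFac y p.2) := by
  simp only [fallFac_eq_smeval]
  exact Ring.descPochhammer_smeval_add N (Commute.all x y)

lemma integral_fallFac_add (θ : ℝ) (N : ℕ) :
    ∫ u in (0:ℝ)..1, fallFac (θ + u) N =
      ∑ p ∈ antidiagonal N, N.choose p.1 * cauchy p.1 * fallFac θ p.2 := by
  simp_rw [add_comm θ, fallFac_add, ← mul_assoc]
  rw [integral_finsetSum fun p _ =>
    (by fun_prop : Continuous fun u => _ * fallFac u p.1 * _).intervalIntegrable 0 1]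
  simp_rw [integral_mul_const, integral_const_mul, cauchy]

lemma sum_antidiagonalTuple_succ {M : Type*} [AddCommMonoid M] (m n : ℕ)
    (f : (Fin (m + 1) → ℕ) → M) :
    ∑ x ∈ Nat.antidiagonalTuple (m + 1) n, f x =
      ∑ p ∈ antidiagonal n, ∑ x ∈ Nat.antidiagonalTuple m p.2, f (Fin.cons p.1 x) := by
  change (Multiset.map f (List.Nat.antidiagonalTuple (m + 1) n : Multiset _)).sum =
    (Multiset.map _ ((List.Nat.antidiagonal n : List (ℕ × ℕ)) : Multiset (ℕ × ℕ))).sum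
  simp only [List.Nat.antidiagonalTuple, List.flatMap, Multiset.map_coe, Multiset.sum_coe,
    List.map_flatten, List.sum_flatten, List.map_map]
  congr 1
  refine List.map_congr_left fun p _ => ?_
  change _ = (Multiset.map _ ((List.Nat.antidiagonalTuple m p.2 : List (Fin m → ℕ)) :
    Multiset (Fin m → ℕ))).sum
  simp only [Multiset.map_coe, Multiset.sum_coe, Function.comp_apply, List.map_map]
  rfl

lemma multinomial_univ_fin_cons {m : ℕ} (a : ℕ) (x : Fin m → ℕ) :
    Nat.multinomial univ (Fin.cons a x : Fin (m + 1) → ℕ) =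
      (a + ∑ i, x i).choose a * Nat.multinomial univ x := by
  rw [Fin.univ_succ, Nat.multinomial_cons]
  simp [Nat.multinomial, sum_map, prod_map]

section Vandermonde

variable {R : Type*} [CommSemiring R]

lemma sum_antidiagonalTuple_succ_multinomial_mul (m n : ℕ) (f : (Fin (m + 1) → ℕ) → R) :
    ∑ x ∈ Nat.antidiagonalTuple (m + 1) n, (Nat.multinomial univ x : R) * f x =
      ∑ p ∈ antidiagonal n, (n.choose p.1 : R) *
        ∑ x ∈ Nat.antidiagonalTuple m p.2, (Nat.multinomial univ x : R) * f (Fin.cons p.1 x) := by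
  rw [sum_antidiagonalTuple_succ]
  refine sum_congr rfl fun p hp => ?_
  rw [mul_sum]
  refine sum_congr rfl fun x hx => ?_
  rw [multinomial_univ_fin_cons, Nat.mem_antidiagonalTuple.1 hx, mem_antidiagonal.1 hp]
  push_cast
  ring

lemma sum_antidiagonal_choose_succ_mul' (n : ℕ) (f : ℕ → ℕ → R) :
    ∑ p ∈ antidiagonal (n + 1), ((n + 1).choose p.1 : R) * f p.1 p.2 =
      ∑ p ∈ antidiagonal n, (n.choose p.1 : R) * (f p.1 (p.2 + 1) + f (p.1 + 1) p.2) := by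
  rw [sum_antidiagonal_choose_succ_mul, ← sum_add_distrib]
  refine sum_congr rfl fun p hp => ?_
  rw [Nat.choose_symm_of_eq_add (mem_antidiagonal.1 hp).symm, mul_add]

lemma sum_antidiagonal_choose_mul_sum_antidiagonal_choose (μ n : ℕ) (Ψ : ℕ → ℕ → R) :
    ∑ p ∈ antidiagonal μ, ∑ q ∈ antidiagonal n,
        (μ.choose p.1 : R) * n.choose q.1 * Ψ (p.1 + q.1) (p.2 + q.2) =
      ∑ r ∈ antidiagonal (μ + n), ((μ + n).choose r.1 : R) * Ψ r.1 r.2 := by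
  induction μ generalizing Ψ with
  | zero => simp
  | succ μ ih =>
    calc _ = ∑ p ∈ antidiagonal (μ + 1), ((μ + 1).choose p.1 : R) *
            ∑ q ∈ antidiagonal n, (n.choose q.1 : R) * Ψ (p.1 + q.1) (p.2 + q.2) := by
          simp_rw [mul_sum, mul_assoc]
      _ = ∑ p ∈ antidiagonal μ, (μ.choose p.1 : R) *
            (∑ q ∈ antidiagonal n, (n.choose q.1 : R) * Ψ (p.1 + q.1) (p.2 + 1 + q.2) +
              ∑ q ∈ antidiagonal n, (n.choose q.1 : R) * Ψ (p.1 + 1 + q.1) (p.2 + q.2)) :=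
          sum_antidiagonal_choose_succ_mul' μ fun a b =>
            ∑ q ∈ antidiagonal n, (n.choose q.1 : R) * Ψ (a + q.1) (b + q.2)
      _ = ∑ r ∈ antidiagonal (μ + n), ((μ + n).choose r.1 : R) *
            (Ψ r.1 (r.2 + 1) + Ψ (r.1 + 1) r.2) := by
          simp_rw [mul_add, sum_add_distrib, mul_sum, ← mul_assoc, add_right_comm _ 1]
          rw [ih fun s t => Ψ s (t + 1), ih fun s t => Ψ (s + 1) t]
      _ = _ := by rw [Nat.add_right_comm, sum_antidiagonal_choose_succ_mul']

theorem sum_multinomial_mul_sum_multinomial (m μ n : ℕ) (F : (Fin m → ℕ) → R) :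
    ∑ l ∈ Nat.antidiagonalTuple m μ, (Nat.multinomial univ l : R) *
        ∑ k ∈ Nat.antidiagonalTuple m n, (Nat.multinomial univ k : R) * F (k + l) =
      ∑ j ∈ Nat.antidiagonalTuple m (μ + n), (Nat.multinomial univ j : R) * F j := by
  induction m generalizing μ n with
  | zero => rcases μ with _ | μ <;> rcases n with _ | n <;> simp [← add_assoc]
  | succ m ih =>
    have hcons (a b : ℕ) (x y : Fin m → ℕ) :
        (Fin.cons a x : Fin (m + 1) → ℕ) + Fin.cons b y = Fin.cons (a + b) (x + y) :=
      Matrix.cons_add_cons a x b y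
    simp_rw [sum_antidiagonalTuple_succ_multinomial_mul, hcons]
    rw [← sum_antidiagonal_choose_mul_sum_antidiagonal_choose μ n fun s t =>
      ∑ j ∈ Nat.antidiagonalTuple m t, (Nat.multinomial univ j : R) * F (Fin.cons s j)]
    refine sum_congr rfl fun p _ => ?_
    simp_rw [mul_sum]
    rw [sum_comm]
    refine sum_congr rfl fun q _ => ?_
    rw [← mul_sum, ← ih p.2 q.2 fun j => F (Fin.cons (p.1 + q.1) j), mul_sum]
    refine sum_congr rfl fun l _ => ?_
    rw [mul_sum, mul_sum]
    refine sum_congr rfl fun k _ => ?_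
    rw [add_comm q.1]
    ring

end Vandermonde

section AlternatingBinomialSums

variable {R : Type*} [CommRing R]

lemma sum_range_choose_succ_mul_neg_one_pow (m : ℕ) (g : ℕ → R) :
    ∑ k ∈ range (m + 2), ((m + 1).choose k : R) * (-1) ^ k * g k =
      ∑ k ∈ range (m + 1), (m.choose k : R) * (-1) ^ k * (g k - g (k + 1)) := by
  have h := sum_choose_succ_mul (fun i _ => (-1 : R) ^ i * g i) m
  simp only [mul_assoc, h, ← sum_add_distrib]
  refine sum_congr rfl fun k _ => by ring

lemma sum_range_choose_mul_neg_one_pow_mul_sub_pow (m : ℕ) (x : R) :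
    ∑ k ∈ range (m + 1), (m.choose k : R) * (-1) ^ k * (x - k) ^ m = m.factorial := by
  have h := congr_fun (fwdDiff_iter_eq_factorial (R := R) (n := m)) (x - m)
  rw [fwdDiff_iter_eq_sum_shift, ← sum_range_reflect] at h
  refine .trans (sum_congr rfl fun k hk => ?_) h
  have hk : k ≤ m := Nat.lt_succ_iff.1 (mem_range.1 hk)
  rw [Nat.add_sub_cancel, Nat.sub_sub_self hk, Nat.choose_symm hk, zsmul_eq_mul, nsmul_one,
    Nat.cast_sub hk]
  push_cast
  ring

end AlternatingBinomialSums

-- With `0 ^ 0 = 1` the claimed derivative is `1` also to the left of `a` when `j = 0`.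
lemma hasDerivAt_max_sub_pow_succ {a t : ℝ} {j : ℕ} (h : a < t ∨ j ≠ 0) :
    HasDerivAt (fun x => max (x - a) 0 ^ (j + 1)) ((j + 1) * max (t - a) 0 ^ j) t := by
  have hIci (ht : a ≤ t) :
      HasDerivWithinAt (fun x => max (x - a) 0 ^ (j + 1)) ((j + 1) * max (t - a) 0 ^ j)
        (Set.Ici a) t := by
    have := ((hasDerivAt_id t).sub_const a).pow (j + 1)
    rw [max_eq_left (sub_nonneg.2 ht)]
    refine this.hasDerivWithinAt.congr (fun x hx => ?_) ?_ |>.congr_deriv (by simp)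
    · simp [max_eq_left (sub_nonneg.2 (Set.mem_Ici.1 hx))]
    · simp [max_eq_left (sub_nonneg.2 ht)]
  have hIic (hj : j ≠ 0) (ht : t ≤ a) :
      HasDerivWithinAt (fun x => max (x - a) 0 ^ (j + 1)) ((j + 1) * max (t - a) 0 ^ j)
        (Set.Iic a) t := by
    rw [max_eq_right (sub_nonpos.2 ht), zero_pow hj, mul_zero]
    refine (hasDerivWithinAt_const t _ (0 : ℝ)).congr (fun x hx => ?_) ?_
    · simp [max_eq_right (sub_nonpos.2 (Set.mem_Iic.1 hx))]
    · simp [max_eq_right (sub_nonpos.2 ht)]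
  rcases lt_trichotomy a t with hat | rfl | hta
  · exact (hIci hat.le).hasDerivAt (Ici_mem_nhds hat)
  · have hj : j ≠ 0 := h.resolve_left (lt_irrefl a)
    simpa [Set.Iic_union_Ici] using (hIic hj le_rfl).union (hIci le_rfl)
  · have hj : j ≠ 0 := h.resolve_left hta.asymm
    exact (hIic hj hta.le).hasDerivAt (Iic_mem_nhds hta)

noncomputable def cdfIH (m : ℕ) (θ : ℝ) : ℝ :=
  (1 / m.factorial : ℝ) * ∑ k ∈ range (m + 1), (m.choose k : ℝ) * (-1) ^ k * max (θ - k) 0 ^ m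

@[fun_prop]
lemma continuous_rhoIH (m : ℕ) : Continuous (rhoIH m) := by
  unfold rhoIH; fun_prop

@[fun_prop]
lemma continuous_cdfIH (m : ℕ) : Continuous (cdfIH m) := by
  unfold cdfIH; fun_prop

lemma cdfIH_of_nonpos {m : ℕ} (hm : m ≠ 0) {θ : ℝ} (hθ : θ ≤ 0) : cdfIH m θ = 0 := by
  refine mul_eq_zero_of_right _ (sum_eq_zero fun k _ => ?_)
  rw [max_eq_right (by linarith [k.cast_nonneg (α := ℝ)]), zero_pow hm, mul_zero]

lemma cdfIH_of_le {m : ℕ} {θ : ℝ} (hθ : m ≤ θ) : cdfIH m θ = 1 := by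
  have hmax : ∀ k ∈ range (m + 1), max (θ - k) 0 = θ - k := fun k hk => by
    have : (k : ℝ) ≤ m := by exact_mod_cast Nat.lt_succ_iff.1 (mem_range.1 hk)
    exact max_eq_left (by linarith)
  rw [cdfIH, sum_congr rfl fun k hk => by rw [hmax k hk],
    sum_range_choose_mul_neg_one_pow_mul_sub_pow, one_div_mul_cancel (by positivity)]

lemma rhoIH_succ {m : ℕ} (hm : m ≠ 0) {θ : ℝ} (hθ : θ ≤ m + 1) :
    rhoIH (m + 1) θ = cdfIH m θ - cdfIH m (θ - 1) := by
  have hlast : max (θ - (m + 1 : ℕ)) 0 ^ m = 0 := by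
    rw [max_eq_right (by push_cast; linarith), zero_pow hm]
  have := sum_range_choose_succ_mul_neg_one_pow m fun k => max (θ - k) 0 ^ m
  rw [sum_range_succ, hlast, mul_zero, add_zero] at this
  rw [rhoIH, cdfIH, cdfIH, Nat.add_sub_cancel, this, ← mul_sub, ← sum_sub_distrib]
  congr 1
  refine sum_congr rfl fun k _ => ?_
  push_cast
  ring_nf

lemma hasDerivAt_cdfIH {m : ℕ} {θ : ℝ} (hθ : θ ∈ Set.Ioo 0 (m : ℝ)) :
    HasDerivAt (cdfIH m) (rhoIH m θ) θ := by
  obtain ⟨j, rfl⟩ : ∃ j, m = j + 1 :=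
    Nat.exists_eq_add_one.2 (Nat.cast_pos.1 (hθ.1.trans hθ.2))
  have hterm (k : ℕ) (hk : k ∈ range (j + 1)) : HasDerivAt
      (fun x : ℝ => ((j + 1).choose k : ℝ) * (-1) ^ k * max (x - k) 0 ^ (j + 1))
      (((j + 1).choose k : ℝ) * (-1) ^ k * ((j + 1) * max (θ - k) 0 ^ j)) θ := by
    refine (hasDerivAt_max_sub_pow_succ ?_).const_mul _
    rcases eq_or_ne j 0 with rfl | hj
    · obtain rfl : k = 0 := by simpa using hk
      exact .inl (by simpa using hθ.1)
    · exact .inr hj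
  have hsum := (HasDerivAt.fun_sum hterm).const_mul (1 / (j + 1).factorial : ℝ)
  have heq : cdfIH (j + 1) =ᶠ[nhds θ] fun x => (1 / (j + 1).factorial : ℝ) *
      ∑ k ∈ range (j + 1), ((j + 1).choose k : ℝ) * (-1) ^ k * max (x - k) 0 ^ (j + 1) := by
    filter_upwards [Iio_mem_nhds hθ.2] with x hx
    have hx : x < j + 1 := by exact_mod_cast hx
    rw [cdfIH, sum_range_succ, max_eq_right (by push_cast; linarith), zero_pow (by omega),
      mul_zero, add_zero]
  refine (hsum.congr_of_eventuallyEq heq).congr_deriv ?_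
  rw [rhoIH, Nat.add_sub_cancel, mul_sum, mul_sum]
  refine sum_congr rfl fun k _ => ?_
  rw [Nat.factorial_succ]
  push_cast
  field_simp

lemma integral_mul_comp_sub_one {f Φ : ℝ → ℝ} {b : ℝ} (hf : Continuous f) (hΦ : Continuous Φ)
    (hΦ0 : ∀ x ≤ 0, Φ x = 0) :
    ∫ t in 0..b + 1, f t * Φ (t - 1) = ∫ θ in 0..b, f (θ + 1) * Φ θ := by
  have hzero : ∫ t in 0..1, f t * Φ (t - 1) = 0 := by
    refine (integral_congr fun t ht => ?_).trans integral_zero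
    rw [Set.uIcc_of_le zero_le_one] at ht
    simp [hΦ0 (t - 1) (by linarith [ht.2])]
  have hshift := integral_comp_add_right (a := 0) (b := b) (fun t => f t * Φ (t - 1)) 1
  simp only [add_sub_cancel_right, zero_add] at hshift
  have hcont : Continuous fun t => f t * Φ (t - 1) := by fun_prop
  rw [← integral_add_adjacent_intervals (b := 1) (hcont.intervalIntegrable _ _)
    (hcont.intervalIntegrable _ _), hzero, zero_add, hshift]

theorem integral_integral_comp_add_mul_deriv {f Φ ρ : ℝ → ℝ} {b : ℝ} (hb : 0 ≤ b)
    (hf : Continuous f) (hΦ : Continuous Φ) (hΦρ : ∀ x ∈ Set.Ioo 0 b, HasDerivAt Φ (ρ x) x)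
    (hρ : IntervalIntegrable ρ MeasureTheory.volume 0 b) (hΦ0 : ∀ x ≤ 0, Φ x = 0)
    (hΦ1 : ∀ x, b ≤ x → Φ x = 1) :
    ∫ θ in 0..b, (∫ u in 0..1, f (θ + u)) * ρ θ = ∫ t in 0..b + 1, f t * (Φ t - Φ (t - 1)) := by
  have hInt {g : ℝ → ℝ} (hg : Continuous g) (a c : ℝ) :
      IntervalIntegrable g MeasureTheory.volume a c :=
    hg.intervalIntegrable a c
  set F : ℝ → ℝ := fun x => ∫ s in 0..x, f s
  have hF (x : ℝ) : HasDerivAt F (f x) x := (hf.integral_hasStrictDerivAt 0 x).hasDerivAt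
  have hFc : Continuous F := continuous_iff_continuousAt.2 fun x => (hF x).continuousAt
  have hFsub (a c : ℝ) : F c - F a = ∫ s in a..c, f s :=
    integral_interval_sub_left (hInt hf _ _) (hInt hf _ _)
  have hmean (θ : ℝ) : ∫ u in 0..1, f (θ + u) = F (θ + 1) - F θ := by
    rw [integral_comp_add_left, add_zero, hFsub]
  have htop : F (b + 1) - F b = ∫ t in b..b + 1, f t * Φ t := by
    rw [hFsub]
    refine integral_congr fun t ht => ?_
    rw [Set.uIcc_of_le (by linarith)] at ht
    simp [hΦ1 t ht.1]
  have hparts : ∫ θ in 0..b, (F (θ + 1) - F θ) * ρ θ =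
      (F (b + 1) - F b) - ∫ θ in 0..b, (f (θ + 1) - f θ) * Φ θ := by
    rw [integral_mul_deriv_eq_deriv_mul_of_hasDerivAt (u := fun θ => F (θ + 1) - F θ)
      (u' := fun θ => f (θ + 1) - f θ) (by fun_prop) hΦ.continuousOn
      (fun x _ => ((hF _).comp_add_const x 1).sub (hF x))
      (by simpa [hb] using hΦρ) (hInt (by fun_prop) _ _) hρ, hΦ1 b le_rfl, hΦ0 0 le_rfl]
    ring
  simp_rw [hmean, hparts, htop, sub_mul, mul_sub]
  rw [integral_sub (hInt (by fun_prop) _ _) (hInt (by fun_prop) _ _),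
    integral_sub (hInt (by fun_prop) _ _) (hInt (by fun_prop) _ _),
    integral_mul_comp_sub_one hf hΦ hΦ0,
    ← integral_add_adjacent_intervals (a := 0) (b := b) (c := b + 1) (hInt (by fun_prop) _ _)
      (hInt (by fun_prop) _ _)]
  ring

lemma integral_mul_rhoIH_succ {m : ℕ} (hm : m ≠ 0) {f : ℝ → ℝ} (hf : Continuous f) :
    ∫ θ in (0 : ℝ)..(m + 1 : ℕ), f θ * rhoIH (m + 1) θ =
      ∫ θ in (0 : ℝ)..m, (∫ u in (0 : ℝ)..1, f (θ + u)) * rhoIH m θ := by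
  rw [integral_integral_comp_add_mul_deriv m.cast_nonneg hf (continuous_cdfIH m)
    (fun _ hx => hasDerivAt_cdfIH hx) ((continuous_rhoIH m).intervalIntegrable _ _)
    (fun _ hx => cdfIH_of_nonpos hm hx) (fun _ hx => cdfIH_of_le hx), Nat.cast_succ]
  refine integral_congr fun t ht => ?_
  rw [Set.uIcc_of_le (by positivity)] at ht
  simp only [rhoIH_succ hm ht.2]

theorem integral_fallFac_mul_rhoIH {m : ℕ} (hm : 1 ≤ m) (N : ℕ) :
    ∫ θ in (0 : ℝ)..m, fallFac θ N * rhoIH m θ =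
      ∑ j ∈ Nat.antidiagonalTuple m N, (Nat.multinomial univ j : ℝ) * ∏ i, cauchy (j i) := by
  induction m, hm using Nat.le_induction generalizing N with
  | base => simp [rhoIH, cauchy]
  | succ m hm ih =>
    rw [integral_mul_rhoIH_succ (by omega) (continuous_fallFac N),
      sum_antidiagonalTuple_succ_multinomial_mul]
    simp_rw [integral_fallFac_add, sum_mul]
    rw [integral_finsetSum fun p _ =>
      (by fun_prop : Continuous fun θ => _ * fallFac θ p.2 * rhoIH m θ).intervalIntegrable _ _]
    refine sum_congr rfl fun p _ => ?_
    simp_rw [mul_assoc, integral_const_mul, ih, Fin.prod_univ_succ, Fin.cons_zero, Fin.cons_succ,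
      mul_sum]
    refine sum_congr rfl fun x _ => by ring

theorem cauchy_convolution_eq_integral (m : ℕ) (hm : 1 ≤ m) (μ n : ℕ) :
    ∑ l ∈ Finset.Nat.antidiagonalTuple m μ,
        (Nat.multinomial Finset.univ l : ℝ) *
          ∑ k ∈ Finset.Nat.antidiagonalTuple m n,
            (Nat.multinomial Finset.univ k : ℝ) * ∏ i, cauchy (k i + l i) =
      ∫ θ in (0:ℝ)..m, fallFac θ (μ + n) * rhoIH m θ := by
  rw [integral_fallFac_mul_rhoIH hm]
  exact sum_multinomial_mul_sum_multinomial m μ n fun j => ∏ i, cauchy (j i)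
end
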